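/- arXiv:2502.04467 — 6 statements merged into one kernel-verified Lean document; each statement's English description precedes it below -/
import Mathlib

section
/- Two distinct catenaries of the form y(x) = a·cosh((x - x0)/a) + y0 (with possibly different parameters a1, x01, y01 and a2, x02, y02, both a1, a2 > 0) that hang from the same two suspension points A = (xA, hA) and B = (xB, hB) with xA < xB cannot coincide at any third point strictly between xA and xB unless they are identical on [xA, xB]; equivalently, two distinct such catenaries through the same endpoints have at most the two endpoint intersections in [xA, xB]. -/
/-! The difference of two catenaries vanishing at three points has, by Rolle's theorem, a derivative
`sinh ((x - x₁) / a₁) - sinh ((x - x₂) / a₂)` vanishing at two distinct points. Since `sinh` is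
injective, the affine maps `x ↦ (x - x₁) / a₁` and `x ↦ (x - x₂) / a₂` then agree at two points, so
they coincide: `a₁ = a₂` and `x₁ = x₂`, and a common value forces `y₁ = y₂`. -/

open Real Set

noncomputable def catenary (a x₀ y₀ x : ℝ) : ℝ := a * cosh ((x - x₀) / a) + y₀

lemma hasDerivAt_catenary {a : ℝ} (ha : a ≠ 0) (x₀ y₀ x : ℝ) :
    HasDerivAt (catenary a x₀ y₀) (sinh ((x - x₀) / a)) x := by
  have hi : HasDerivAt (fun x : ℝ => (x - x₀) / a) (1 / a) x :=
    ((hasDerivAt_id x).sub_const x₀).div_const a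
  have h := (((hasDerivAt_cosh _).comp x hi).const_mul a).add_const y₀
  rwa [mul_left_comm, mul_one_div_cancel ha, mul_one] at h

lemma exists_lt_hasDerivAt_eq_zero_of_eq_of_eq {f f' : ℝ → ℝ} {s t u : ℝ} (hst : s < t)
    (htu : t < u) (hfc : ContinuousOn f (Icc s u)) (hff' : ∀ x ∈ Ioo s u, HasDerivAt f (f' x) x)
    (hs : f s = f t) (hu : f t = f u) : ∃ d₁ d₂, d₁ < d₂ ∧ f' d₁ = 0 ∧ f' d₂ = 0 := by
  obtain ⟨d₁, hd₁, hf'd₁⟩ := exists_hasDerivAt_eq_zero hst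
    (hfc.mono (Icc_subset_Icc_right htu.le)) hs
    (fun x hx => hff' x ⟨hx.1, hx.2.trans htu⟩)
  obtain ⟨d₂, hd₂, hf'd₂⟩ := exists_hasDerivAt_eq_zero htu
    (hfc.mono (Icc_subset_Icc_left hst.le)) hu
    (fun x hx => hff' x ⟨hst.trans hx.1, hx.2⟩)
  exact ⟨d₁, d₂, hd₁.2.trans hd₂.1, hf'd₁, hf'd₂⟩

lemma eq_and_eq_of_sub_div_eq_sub_div {a₁ a₂ p₁ p₂ d₁ d₂ : ℝ} (ha₁ : a₁ ≠ 0) (ha₂ : a₂ ≠ 0)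
    (hd : d₁ ≠ d₂) (h₁ : (d₁ - p₁) / a₁ = (d₁ - p₂) / a₂) (h₂ : (d₂ - p₁) / a₁ = (d₂ - p₂) / a₂) :
    a₁ = a₂ ∧ p₁ = p₂ := by
  rw [div_eq_div_iff ha₁ ha₂] at h₁ h₂
  have ha : a₁ = a₂ := by
    have : (d₁ - d₂) * (a₂ - a₁) = 0 := by linear_combination h₁ - h₂
    linarith [(mul_eq_zero.mp this).resolve_left (sub_ne_zero.mpr hd)]
  subst ha
  exact ⟨rfl, by simpa [ha₁] using h₁⟩

theorem catenary_params_eq_of_agree_at_three {a₁ x₁ y₁ a₂ x₂ y₂ s t u : ℝ} (ha₁ : a₁ ≠ 0)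
    (ha₂ : a₂ ≠ 0) (hst : s < t) (htu : t < u)
    (hs : catenary a₁ x₁ y₁ s = catenary a₂ x₂ y₂ s)
    (ht : catenary a₁ x₁ y₁ t = catenary a₂ x₂ y₂ t)
    (hu : catenary a₁ x₁ y₁ u = catenary a₂ x₂ y₂ u) :
    a₁ = a₂ ∧ x₁ = x₂ ∧ y₁ = y₂ := by
  set F := catenary a₁ x₁ y₁ - catenary a₂ x₂ y₂
  have hF : ∀ x, HasDerivAt F (sinh ((x - x₁) / a₁) - sinh ((x - x₂) / a₂)) x := fun x =>
    (hasDerivAt_catenary ha₁ x₁ y₁ x).sub (hasDerivAt_catenary ha₂ x₂ y₂ x)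
  obtain ⟨d₁, d₂, hd, hd₁, hd₂⟩ := exists_lt_hasDerivAt_eq_zero_of_eq_of_eq hst htu
    (fun x _ => (hF x).continuousAt.continuousWithinAt) (fun x _ => hF x)
    (by simp [F, hs, ht]) (by simp [F, ht, hu])
  obtain ⟨rfl, rfl⟩ := eq_and_eq_of_sub_div_eq_sub_div ha₁ ha₂ hd.ne
    (sinh_injective (sub_eq_zero.mp hd₁)) (sinh_injective (sub_eq_zero.mp hd₂))
  exact ⟨rfl, rfl, by simpa [catenary] using hs⟩

theorem catenaries_no_third_intersection_general
    (a1 x01 y01 a2 x02 y02 xA xB hA hB : ℝ)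
    (ha1 : 0 < a1) (ha2 : 0 < a2)
    (C1 C2 : ℝ → ℝ)
    (hC1 : ∀ x, C1 x = a1 * Real.cosh ((x - x01) / a1) + y01)
    (hC2 : ∀ x, C2 x = a2 * Real.cosh ((x - x02) / a2) + y02)
    (hA1 : C1 xA = hA) (hA2 : C2 xA = hA)
    (hB1 : C1 xB = hB) (hB2 : C2 xB = hB)
    (hdist : ∃ x ∈ Set.Ioo xA xB, C1 x ≠ C2 x) :
    ∀ x ∈ Set.Ioo xA xB, C1 x ≠ C2 x := by
  obtain ⟨z, -, hz⟩ := hdist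
  intro c hc hc_eq
  obtain rfl : C1 = catenary a1 x01 y01 := funext hC1
  obtain rfl : C2 = catenary a2 x02 y02 := funext hC2
  obtain ⟨rfl, rfl, rfl⟩ := catenary_params_eq_of_agree_at_three ha1.ne' ha2.ne' hc.1 hc.2
    (hA1.trans hA2.symm) hc_eq (hB1.trans hB2.symm)
  exact hz rfl

theorem catenaries_no_third_intersection
    (a1 x01 y01 a2 x02 y02 xA xB hA hB : ℝ)
    (ha1 : 0 < a1) (ha2 : 0 < a2) (hx : xA < xB)
    (C1 C2 : ℝ → ℝ)
    (hC1 : ∀ x, C1 x = a1 * Real.cosh ((x - x01) / a1) + y01)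
    (hC2 : ∀ x, C2 x = a2 * Real.cosh ((x - x02) / a2) + y02)
    (hA1 : C1 xA = hA) (hA2 : C2 xA = hA)
    (hB1 : C1 xB = hB) (hB2 : C2 xB = hB)
    (hdist : ∃ x ∈ Set.Ioo xA xB, C1 x ≠ C2 x) :
    ∀ x ∈ Set.Ioo xA xB, C1 x ≠ C2 x :=
  catenaries_no_third_intersection_general a1 x01 y01 a2 x02 y02 xA xB hA hB ha1 ha2 C1 C2 hC1 hC2
    hA1 hA2 hB1 hB2 hdist
end

section
/- Let f, g : [xA, xB] → ℝ be convex, continuously differentiable functions with f(xA) = g(xA), f(xB) = g(xB), and f(x) > g(x) for all x ∈ (xA, xB). Then the arc length of the graph of f is at most the arc length of the graph of g. -/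
/-!
By the tangent-line inequality for the convex function `φ t = √(1 + t²)`,
`φ (g') ≥ φ (f') + φ' (f') (g' - f')` pointwise, so it suffices that `∫ φ' (f') (g' - f') ≥ 0`.
As `f` is convex, `ψ = φ' ∘ f'` is monotone, and integrating by parts against the Stieltjes
measure `dψ` turns this integral into `∫ (f - g) dψ`, which is nonnegative because `g - f`
vanishes at both endpoints and `g ≤ f` in between.
-/

open MeasureTheory Set intervalIntegral

theorem sqrt_one_add_sq_add_mul_sub_le (a b : ℝ) :
    √(1 + a ^ 2) + a / √(1 + a ^ 2) * (b - a) ≤ √(1 + b ^ 2) := by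
  have hpos : 0 < √(1 + a ^ 2) := Real.sqrt_pos.2 (by positivity)
  have hsq : √(1 + a ^ 2) ^ 2 = 1 + a ^ 2 := Real.sq_sqrt (by positivity)
  have cauchy_schwarz : 1 + a * b ≤ √(1 + a ^ 2) * √(1 + b ^ 2) := by
    rw [← Real.sqrt_mul (by positivity)]
    exact (le_abs_self _).trans (Real.abs_le_sqrt (by nlinarith [sq_nonneg (a - b)]))
  calc √(1 + a ^ 2) + a / √(1 + a ^ 2) * (b - a) = (1 + a * b) / √(1 + a ^ 2) := by
        field_simp
        linarith
    _ ≤ √(1 + b ^ 2) := by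
        rw [div_le_iff₀ hpos]
        linarith [mul_comm √(1 + a ^ 2) √(1 + b ^ 2)]

theorem monotone_div_sqrt_one_add_sq : Monotone fun t : ℝ => t / √(1 + t ^ 2) := by
  intro a b hab
  have tangent_at_a := sqrt_one_add_sq_add_mul_sub_le a b
  have tangent_at_b := sqrt_one_add_sq_add_mul_sub_le b a
  rcases hab.eq_or_lt with rfl | hlt
  · rfl
  · nlinarith

theorem StieltjesFunction.intervalIntegral_sub_mul_eq (S : StieltjesFunction ℝ) {a b : ℝ}
    {H : ℝ → ℝ} (hab : a ≤ b) (hH : IntervalIntegrable H volume a b) :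
    ∫ x in a..b, (S x - S a) * H x = ∫ t in Ioc a b, (∫ x in t..b, H x) ∂S.measure := by
  set ν := S.measure.restrict (Ioc a b)
  have : IsFiniteMeasure ν := isFiniteMeasure_restrict.2 (by simp [S.measure_Ioc])
  -- Fubini for `𝟙{t ≤ x} H x` against `dx ⊗ dS(t)` on `(a, b]²`.
  set Φ : ℝ × ℝ → ℝ := {p | p.2 ≤ p.1}.indicator fun p => H p.1
  have hΦ : Integrable Φ ((volume.restrict (Ioc a b)).prod ν) :=
    (((intervalIntegrable_iff_integrableOn_Ioc_of_le hab).1 hH).comp_fst ν).indicator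
      (measurableSet_le measurable_snd measurable_fst)
  have outer : ∀ x ∈ Ioc a b, ∫ t, Φ (x, t) ∂ν = (S x - S a) * H x := by
    intro x hx
    have hΦx : (fun t => Φ (x, t)) = (Iic x).indicator fun _ => H x := by
      ext t; simp [Φ, indicator_apply]
    rw [hΦx, integral_indicator_const _ measurableSet_Iic, measureReal_restrict_apply
      measurableSet_Iic, Iic_inter_Ioc_of_le hx.2, measureReal_def, S.measure_Ioc,
      ENNReal.toReal_ofReal (sub_nonneg.2 (S.mono hx.1.le)), smul_eq_mul]
  have inner : ∀ t ∈ Ioc a b, ∫ x in Ioc a b, Φ (x, t) = ∫ x in t..b, H x := by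
    intro t ht
    have hΦt : (fun x => Φ (x, t)) = (Ici t).indicator H := by
      ext x; simp [Φ, indicator_apply]
    have hIcc : Ici t ∩ Ioc a b = Icc t b := by
      ext x
      simp only [mem_inter_iff, mem_Ici, mem_Ioc, mem_Icc]
      exact ⟨fun hx => ⟨hx.1, hx.2.2⟩, fun hx => ⟨hx.1, ht.1.trans_le hx.1, hx.2⟩⟩
    rw [hΦt, MeasureTheory.integral_indicator measurableSet_Ici,
      Measure.restrict_restrict measurableSet_Ici, hIcc, integral_Icc_eq_integral_Ioc,
      ← integral_of_le ht.2]
  calc ∫ x in a..b, (S x - S a) * H x = ∫ x in Ioc a b, ∫ t, Φ (x, t) ∂ν := by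
        rw [integral_of_le hab]
        exact setIntegral_congr_fun measurableSet_Ioc fun x hx => (outer x hx).symm
    _ = ∫ t, (∫ x in Ioc a b, Φ (x, t)) ∂ν := integral_integral_swap hΦ
    _ = ∫ t in Ioc a b, (∫ x in t..b, H x) ∂S.measure :=
        setIntegral_congr_fun measurableSet_Ioc inner

theorem integral_mul_deriv_nonneg_of_monotoneOn {a b : ℝ} {ψ h H : ℝ → ℝ} (hab : a ≤ b)
    (hψm : MonotoneOn ψ (Icc a b)) (hψc : ContinuousOn ψ (Icc a b))
    (hh : ContinuousOn h (Icc a b)) (hder : ∀ x ∈ Ioo a b, HasDerivAt h (H x) x)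
    (hH : IntervalIntegrable H volume a b) (ha : h a = 0) (hb : h b = 0)
    (hneg : ∀ x ∈ Ioo a b, h x ≤ 0) :
    0 ≤ ∫ x in a..b, ψ x * H x := by
  -- A Stieltjes function is monotone on all of `ℝ`, so freeze `ψ` outside `[a, b]`.
  let S : StieltjesFunction ℝ :=
    { toFun := fun x => ψ (projIcc a b hab x)
      mono' := fun x y hxy =>
        hψm (projIcc a b hab x).2 (projIcc a b hab y).2 (monotone_projIcc hab hxy)
      right_continuous' := fun x =>
        (hψc.comp_continuous (continuous_subtype_val.comp continuous_projIcc)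
          fun y => (projIcc a b hab y).2).continuousWithinAt }
  have hSψ : ∀ x ∈ Icc a b, S x = ψ x := fun x hx => by
    simp [S, projIcc_of_mem hab hx]
  have ftc : ∀ t ∈ Icc a b, ∫ x in t..b, H x = -h t := fun t ht => by
    rw [integral_eq_sub_of_hasDeriv_right_of_le ht.2 (hh.mono (Icc_subset_Icc_left ht.1))
      (fun x hx => (hder x ⟨ht.1.trans_lt hx.1, hx.2⟩).hasDerivWithinAt)
      (hH.mono_set (by simp [uIcc_of_le hab, uIcc_of_le ht.2, Icc_subset_Icc_left ht.1])), hb,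
      zero_sub]
  have hψH : IntervalIntegrable (fun x => ψ x * H x) volume a b :=
    hH.continuousOn_mul (by rwa [uIcc_of_le hab])
  have hshift : ∫ x in a..b, ψ x * H x = ∫ x in a..b, (S x - S a) * H x := by
    have hH0 : ∫ x in a..b, H x = 0 := by rw [ftc a (left_mem_Icc.2 hab), ha, neg_zero]
    calc ∫ x in a..b, ψ x * H x = ∫ x in a..b, (ψ x * H x - S a * H x) := by
          rw [integral_sub hψH (hH.const_mul _), intervalIntegral.integral_const_mul, hH0, mul_zero, sub_zero]
      _ = ∫ x in a..b, (S x - S a) * H x := integral_congr fun x hx => by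
          rw [uIcc_of_le hab] at hx
          rw [hSψ x hx, sub_mul]
  rw [hshift, S.intervalIntegral_sub_mul_eq hab hH]
  refine setIntegral_nonneg measurableSet_Ioc fun t ht => ?_
  rw [ftc t (Ioc_subset_Icc_self ht), neg_nonneg]
  rcases ht.2.lt_or_eq with htb | rfl
  · exact hneg t ⟨ht.1, htb⟩
  · exact hb.le

theorem integral_sqrt_one_add_sq_le_of_monotoneOn {a b : ℝ} {f g F' G' : ℝ → ℝ} (hab : a ≤ b)
    (hF'm : MonotoneOn F' (Icc a b)) (hF' : ContinuousOn F' (Icc a b))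
    (hG' : ContinuousOn G' (Icc a b)) (hf : ContinuousOn f (Icc a b))
    (hg : ContinuousOn g (Icc a b)) (hff' : ∀ x ∈ Ioo a b, HasDerivAt f (F' x) x)
    (hgg' : ∀ x ∈ Ioo a b, HasDerivAt g (G' x) x) (ha : f a = g a) (hb : f b = g b)
    (hle : ∀ x ∈ Ioo a b, g x ≤ f x) :
    ∫ x in a..b, √(1 + F' x ^ 2) ≤ ∫ x in a..b, √(1 + G' x ^ 2) := by
  set ψ : ℝ → ℝ := fun x => F' x / √(1 + F' x ^ 2)
  have hint : ∀ {u : ℝ → ℝ}, ContinuousOn u (Icc a b) → IntervalIntegrable u volume a b :=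
    fun hu => hu.intervalIntegrable_of_Icc hab
  have hsqrt : ∀ {u : ℝ → ℝ}, ContinuousOn u (Icc a b) →
      ContinuousOn (fun x => √(1 + u x ^ 2)) (Icc a b) := fun hu =>
    (continuousOn_const.add (hu.pow 2)).sqrt
  have hψ : ContinuousOn ψ (Icc a b) :=
    hF'.div (hsqrt hF') fun x _ => (Real.sqrt_pos.2 (by positivity)).ne'
  have hψH : IntervalIntegrable (fun x => ψ x * (G' x - F' x)) volume a b :=
    hint (hψ.mul (hG'.sub hF'))
  have tangent : ∀ x ∈ Icc a b, √(1 + F' x ^ 2) ≤ √(1 + G' x ^ 2) - ψ x * (G' x - F' x) :=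
    fun x _ => by linarith [sqrt_one_add_sq_add_mul_sub_le (F' x) (G' x)]
  have key : 0 ≤ ∫ x in a..b, ψ x * (G' x - F' x) :=
    integral_mul_deriv_nonneg_of_monotoneOn hab (monotone_div_sqrt_one_add_sq.comp_monotoneOn hF'm)
      hψ (hg.sub hf) (fun x hx => (hgg' x hx).sub (hff' x hx)) (hint (hG'.sub hF'))
      (by simp [ha]) (by simp [hb]) fun x hx => sub_nonpos.2 (hle x hx)
  calc ∫ x in a..b, √(1 + F' x ^ 2)
      ≤ ∫ x in a..b, (√(1 + G' x ^ 2) - ψ x * (G' x - F' x)) :=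
        integral_mono_on hab (hint (hsqrt hF')) ((hint (hsqrt hG')).sub hψH) tangent
    _ = (∫ x in a..b, √(1 + G' x ^ 2)) - ∫ x in a..b, ψ x * (G' x - F' x) :=
        integral_sub (hint (hsqrt hG')) hψH
    _ ≤ ∫ x in a..b, √(1 + G' x ^ 2) := sub_le_self _ key

theorem higher_convex_curve_not_longer_general
    (xA xB : ℝ) (hx : xA < xB) (f g : ℝ → ℝ)
    (hfconv : ConvexOn ℝ (Set.Icc xA xB) f)
    (hf : ContDiffOn ℝ 1 f (Set.Icc xA xB))
    (hg : ContDiffOn ℝ 1 g (Set.Icc xA xB))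
    (hA : f xA = g xA) (hB : f xB = g xB)
    (hgt : ∀ x ∈ Set.Ioo xA xB, g x < f x) :
    (∫ x in xA..xB, Real.sqrt (1 + derivWithin f (Set.Icc xA xB) x ^ 2)) ≤
      ∫ x in xA..xB, Real.sqrt (1 + derivWithin g (Set.Icc xA xB) x ^ 2) := by
  have hasDerivAt_interior : ∀ {u : ℝ → ℝ}, DifferentiableOn ℝ u (Icc xA xB) →
      ∀ x ∈ Ioo xA xB, HasDerivAt u (derivWithin u (Icc xA xB) x) x := fun hu x hx' =>
    (hu x (Ioo_subset_Icc_self hx')).hasDerivWithinAt.hasDerivAt (Icc_mem_nhds hx'.1 hx'.2)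
  have hfd := hf.differentiableOn one_ne_zero
  have hgd := hg.differentiableOn one_ne_zero
  exact integral_sqrt_one_add_sq_le_of_monotoneOn hx.le (hfconv.monotoneOn_derivWithin hfd)
    (hf.continuousOn_derivWithin (uniqueDiffOn_Icc hx) le_rfl)
    (hg.continuousOn_derivWithin (uniqueDiffOn_Icc hx) le_rfl) hf.continuousOn hg.continuousOn
    (hasDerivAt_interior hfd) (hasDerivAt_interior hgd) hA hB fun x hx' => (hgt x hx').le

theorem higher_convex_curve_not_longer
    (xA xB : ℝ) (hx : xA < xB) (f g : ℝ → ℝ)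
    (hfconv : ConvexOn ℝ (Set.Icc xA xB) f)
    (hgconv : ConvexOn ℝ (Set.Icc xA xB) g)
    (hf : ContDiffOn ℝ 1 f (Set.Icc xA xB))
    (hg : ContDiffOn ℝ 1 g (Set.Icc xA xB))
    (hA : f xA = g xA) (hB : f xB = g xB)
    (hgt : ∀ x ∈ Set.Ioo xA xB, g x < f x) :
    (∫ x in xA..xB, Real.sqrt (1 + derivWithin f (Set.Icc xA xB) x ^ 2)) ≤
      ∫ x in xA..xB, Real.sqrt (1 + derivWithin g (Set.Icc xA xB) x ^ 2) :=
  higher_convex_curve_not_longer_general xA xB hx f g hfconv hf hg hA hB hgt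
end

section
/- Fix A = (xA, yA) and B = (xB, yB) with xA < xB, and let f_p be the quadratic through A and B with leading coefficient p ≤ 0. If p1 < p2 ≤ 0, then the arc length of f_{p1} over [xA, xB] is strictly greater than the arc length of f_{p2} over [xA, xB]. -/
/-!
Both parabolas have slope `S = (yB - yA) / (xB - xA)` at the midpoint `m` of `[xA, xB]`, so the
arc length of `f_p` is `∫₀ʰ (g (S + 2 p u) + g (S - 2 p u)) du` with `g y = √(1 + y²)` and
`h = (xB - xA) / 2`. Since `g` is strictly convex, `g (S + t) + g (S - t)` strictly increases
with `|t|`, and `|p₁| > |p₂|`.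
-/

open Real Set MeasureTheory intervalIntegral

theorem Real.tanh_strictMono : StrictMono tanh := fun x y hxy => by
  by_contra! h
  have := artanh_le_artanh (neg_one_lt_tanh y) (tanh_lt_one x) h
  rw [artanh_tanh, artanh_tanh] at this
  linarith

theorem strictMono_div_sqrt_one_add_sq : StrictMono fun x : ℝ => x / √(1 + x ^ 2) := by
  simpa only [Function.comp_def, tanh_arsinh] using tanh_strictMono.comp arsinh_strictMono

theorem hasDerivAt_sqrt_one_add_sq (x : ℝ) :
    HasDerivAt (fun y : ℝ => √(1 + y ^ 2)) (x / √(1 + x ^ 2)) x := by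
  convert ((hasDerivAt_pow 2 x).const_add 1).sqrt (by positivity) using 1
  field_simp
  ring

theorem strictConvexOn_sqrt_one_add_sq : StrictConvexOn ℝ univ fun x : ℝ => √(1 + x ^ 2) := by
  refine StrictMono.strictConvexOn_univ_of_deriv (by fun_prop) ?_
  rw [funext fun x => (hasDerivAt_sqrt_one_add_sq x).deriv]
  exact strictMono_div_sqrt_one_add_sq

theorem StrictConvexOn.add_sub_lt_add_sub {f : ℝ → ℝ} (hf : StrictConvexOn ℝ univ f) (c : ℝ)
    {e d : ℝ} (hed : |e| < |d|) : f (c + e) + f (c - e) < f (c + d) + f (c - d) := by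
  have hd : d ≠ 0 := abs_pos.mp ((abs_nonneg e).trans_lt hed)
  have hsq : e ^ 2 < d ^ 2 := sq_lt_sq.mpr hed
  -- `c + e` and `c - e` are the convex combinations of `c + d`, `c - d` with weights `(a, b)`, `(b, a)`
  obtain ⟨a, ha⟩ : ∃ a, a = (d + e) / (2 * d) := ⟨_, rfl⟩
  obtain ⟨b, hb⟩ : ∃ b, b = (d - e) / (2 * d) := ⟨_, rfl⟩
  have hab : a + b = 1 := by rw [ha, hb]; field_simp; ring
  have hab' : a * b = (d ^ 2 - e ^ 2) / (4 * d ^ 2) := by rw [ha, hb]; field_simp; ring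
  have hpos : 0 < a * b := hab' ▸ div_pos (by linarith) (by positivity)
  have ha₀ : 0 < a := by nlinarith
  have hb₀ : 0 < b := by nlinarith
  have hne : c + d ≠ c - d := fun h => hd (by linarith)
  have h₁ := hf.2 (mem_univ _) (mem_univ _) hne ha₀ hb₀ hab
  have h₂ := hf.2 (mem_univ _) (mem_univ _) hne hb₀ ha₀ (by rw [add_comm, hab])
  rw [show a • (c + d) + b • (c - d) = c + e by
    rw [ha, hb, smul_eq_mul, smul_eq_mul]; field_simp; ring] at h₁
  rw [show b • (c + d) + a • (c - d) = c - e by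
    rw [ha, hb, smul_eq_mul, smul_eq_mul]; field_simp; ring] at h₂
  simp only [smul_eq_mul] at h₁ h₂
  linear_combination h₁ + h₂ + (f (c + d) + f (c - d)) * hab

theorem integral_eq_integral_fold_midpoint {E : Type*} [NormedAddCommGroup E]
    [NormedSpace ℝ E] {f : ℝ → E} {a b : ℝ} (hf : Continuous f) :
    ∫ x in a..b, f x = ∫ u in 0..(b - a) / 2, (f ((a + b) / 2 + u) + f ((a + b) / 2 - u)) := by
  have hright : ∫ u in 0..(b - a) / 2, f ((a + b) / 2 + u) = ∫ x in (a + b) / 2..b, f x := by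
    rw [integral_comp_add_left]; congr 1 <;> ring
  have hleft : ∫ u in 0..(b - a) / 2, f ((a + b) / 2 - u) = ∫ x in a..(a + b) / 2, f x := by
    rw [integral_comp_sub_left]; congr 1 <;> ring
  have hplus : Continuous fun u => f ((a + b) / 2 + u) := by fun_prop
  have hminus : Continuous fun u => f ((a + b) / 2 - u) := by fun_prop
  rw [integral_add (hplus.intervalIntegrable _ _) (hminus.intervalIntegrable _ _), hright, hleft,
    add_comm, integral_add_adjacent_intervals (hf.intervalIntegrable _ _) (hf.intervalIntegrable _ _)]

theorem slope_quadratic {p q r a b : ℝ} {f : ℝ → ℝ} (hf : ∀ x, f x = p * x ^ 2 + q * x + r)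
    (hab : a ≠ b) : slope f a b = p * (a + b) + q := by
  rw [slope_def_field, hf, hf]
  field_simp [sub_ne_zero.mpr hab.symm]
  ring

theorem integral_sqrt_one_add_sq_affine_eq_fold (p q a b : ℝ) :
    ∫ x in a..b, √(1 + (2 * p * x + q) ^ 2) =
      ∫ u in 0..(b - a) / 2,
        (√(1 + (p * (a + b) + q + 2 * p * u) ^ 2) + √(1 + (p * (a + b) + q - 2 * p * u) ^ 2)) := by
  rw [integral_eq_integral_fold_midpoint (by fun_prop)]
  congr 1 with u
  ring_nf

theorem lower_leading_coeff_longer_parabola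
    (xA yA xB yB p1 q1 r1 p2 q2 r2 : ℝ) (hx : xA < xB)
    (hp : p1 < p2) (hp2 : p2 ≤ 0)
    (f1 f2 : ℝ → ℝ)
    (hf1 : ∀ x, f1 x = p1 * x ^ 2 + q1 * x + r1)
    (hf2 : ∀ x, f2 x = p2 * x ^ 2 + q2 * x + r2)
    (hA1 : f1 xA = yA) (hA2 : f2 xA = yA)
    (hB1 : f1 xB = yB) (hB2 : f2 xB = yB) :
    (∫ x in xA..xB, Real.sqrt (1 + (2 * p2 * x + q2) ^ 2)) <
      ∫ x in xA..xB, Real.sqrt (1 + (2 * p1 * x + q1) ^ 2) := by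
  have hS : p2 * (xA + xB) + q2 = p1 * (xA + xB) + q1 := by
    rw [← slope_quadratic hf1 hx.ne, ← slope_quadratic hf2 hx.ne, slope_def_field,
      slope_def_field, hA1, hA2, hB1, hB2]
  rw [integral_sqrt_one_add_sq_affine_eq_fold, integral_sqrt_one_add_sq_affine_eq_fold, hS]
  set S := p1 * (xA + xB) + q1
  have hlt : ∀ u > 0, √(1 + (S + 2 * p2 * u) ^ 2) + √(1 + (S - 2 * p2 * u) ^ 2) <
      √(1 + (S + 2 * p1 * u) ^ 2) + √(1 + (S - 2 * p1 * u) ^ 2) := fun u hu =>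
    strictConvexOn_sqrt_one_add_sq.add_sub_lt_add_sub S <| sq_lt_sq.mp <| by
      nlinarith [mul_pos (mul_pos (sub_pos.2 hp) (by linarith : 0 < -(p1 + p2))) (pow_pos hu 2)]
  exact integral_lt_integral_of_continuousOn_of_le_of_exists_lt (by linarith) (by fun_prop)
    (by fun_prop) (fun u hu => (hlt u hu.1).le)
    ⟨(xB - xA) / 2, right_mem_Icc.2 (by linarith), hlt _ (by linarith)⟩
end

section
/- Let C1 and C2 be catenaries hanging from the same suspension points A = (xA, hA), B = (xB, hB), xA < xB, with arc lengths l1 and l2 over [xA, xB]. If l1 ≥ l2, then C2(x) ≥ C1(x) for all x ∈ [xA, xB]. -/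
/-!
With `u = (x - x₀) / a`, a catenary `a cosh u + y₀` has arc length `a sinh u_q - a sinh u_p` over
`[p, q]`; writing `u_q, u_p` as `m ± t` gives `l² = (C q - C p)² + (2a sinh ((q - p) / 2a))²`.
Catenaries through the same two points share `C q - C p`, and `a ↦ a sinh (w / a)` is strictly
decreasing (`sinh t / t` increases by convexity of `sinh`), so the longer one has the smaller
parameter. If `a₁ ≤ a₂`, the derivative `sinh u₁ - sinh u₂` of `C₁ - C₂` has the sign of
`u₁ - u₂`, a nondecreasing affine function of `x`; so `C₁ - C₂` decreases and then increases, and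
on `[p, q]` it stays below its endpoint values `0`.
-/

open Real Set

lemma hasDerivAt_mul_comp_sub_div {F : ℝ → ℝ} {F' a x₀ x : ℝ} (ha : a ≠ 0)
    (hF : HasDerivAt F F' ((x - x₀) / a)) :
    HasDerivAt (fun x => a * F ((x - x₀) / a)) F' x := by
  have hu : HasDerivAt (fun x => (x - x₀) / a) (1 / a) x := by
    simpa using ((hasDerivAt_id x).sub_const x₀).div_const a
  exact ((hF.comp x hu).const_mul a).congr_deriv (by field_simp)

lemma integral_arcLength_catenary {a : ℝ} (ha : a ≠ 0) (x₀ y₀ p q : ℝ) :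
    ∫ x in p..q, √(1 + deriv (catenary a x₀ y₀) x ^ 2) =
      a * sinh ((q - x₀) / a) - a * sinh ((p - x₀) / a) := by
  have hcosh : ∀ x, √(1 + deriv (catenary a x₀ y₀) x ^ 2) = cosh ((x - x₀) / a) := by
    intro x
    rw [(hasDerivAt_catenary ha x₀ y₀ x).deriv, add_comm, ← cosh_sq, sqrt_sq (cosh_pos _).le]
  simp only [hcosh]
  exact intervalIntegral.integral_eq_sub_of_hasDerivAt
    (fun x _ => hasDerivAt_mul_comp_sub_div ha (hasDerivAt_sinh _))
    ((by fun_prop : Continuous fun x => cosh ((x - x₀) / a)).intervalIntegrable _ _)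

lemma sq_sinh_sub_sinh (x y : ℝ) :
    (sinh x - sinh y) ^ 2 = (cosh x - cosh y) ^ 2 + (2 * sinh ((x - y) / 2)) ^ 2 := by
  obtain ⟨m, t, rfl, rfl⟩ : ∃ m t, x = m + t ∧ y = m - t :=
    ⟨(x + y) / 2, (x - y) / 2, by ring, by ring⟩
  rw [show (m + t - (m - t)) / 2 = t by ring, sinh_add, sinh_sub, cosh_add, cosh_sub]
  linear_combination (2 * sinh t) ^ 2 * cosh_sq_sub_sinh_sq m

lemma sq_arcLength_catenary (a x₀ y₀ p q : ℝ) :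
    (a * sinh ((q - x₀) / a) - a * sinh ((p - x₀) / a)) ^ 2 =
      (catenary a x₀ y₀ q - catenary a x₀ y₀ p) ^ 2 + (2 * (a * sinh ((q - p) / 2 / a))) ^ 2 := by
  have h := sq_sinh_sub_sinh ((q - x₀) / a) ((p - x₀) / a)
  rw [show ((q - x₀) / a - (p - x₀) / a) / 2 = (q - p) / 2 / a by ring] at h
  unfold catenary
  linear_combination a ^ 2 * h

lemma strictConvexOn_sinh : StrictConvexOn ℝ (Ici 0) sinh :=
  StrictMonoOn.strictConvexOn_of_deriv (convex_Ici 0) continuous_sinh.continuousOn <| by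
    rw [Real.deriv_sinh, interior_Ici]
    exact cosh_strictMonoOn.mono Ioi_subset_Ici_self

lemma strictMonoOn_sinh_div_self : StrictMonoOn (fun t => sinh t / t) (Ioi 0) := by
  intro s hs t ht hst
  simpa using strictConvexOn_sinh.secant_strict_mono self_mem_Ici (Ioi_subset_Ici_self hs)
    (Ioi_subset_Ici_self ht) (ne_of_gt hs) (ne_of_gt ht) hst

lemma strictAntiOn_mul_sinh_div {w : ℝ} (hw : 0 < w) :
    StrictAntiOn (fun a => a * sinh (w / a)) (Ioi 0) := by
  intro a (ha : 0 < a) b (hb : 0 < b) hab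
  calc b * sinh (w / b) = w * (sinh (w / b) / (w / b)) := by field_simp
    _ < w * (sinh (w / a) / (w / a)) := mul_lt_mul_of_pos_left
        (strictMonoOn_sinh_div_self (div_pos hw hb) (div_pos hw ha)
          (div_lt_div_of_pos_left hw ha hab)) hw
    _ = a * sinh (w / a) := by field_simp

lemma le_max_of_hasDerivAt_of_sign_monotone {f f' δ : ℝ → ℝ} (hf : ∀ x, HasDerivAt f (f' x) x)
    (hδ : Monotone δ) (hneg : ∀ x, δ x ≤ 0 → f' x ≤ 0) (hpos : ∀ x, 0 ≤ δ x → 0 ≤ f' x)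
    {p q x : ℝ} (hx : x ∈ Icc p q) : f x ≤ max (f p) (f q) := by
  have hcont : Continuous f := continuous_iff_continuousAt.2 fun y => (hf y).continuousAt
  rcases le_total (δ x) 0 with hδx | hδx
  · have hanti : AntitoneOn f (Icc p x) :=
      antitoneOn_of_hasDerivWithinAt_nonpos (convex_Icc p x) hcont.continuousOn
        (fun y _ => (hf y).hasDerivWithinAt) fun y hy => by
          rw [interior_Icc] at hy
          exact hneg y ((hδ hy.2.le).trans hδx)
    exact le_max_of_le_left (hanti ⟨le_rfl, hx.1⟩ ⟨hx.1, le_rfl⟩ hx.1)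
  · have hmono : MonotoneOn f (Icc x q) :=
      monotoneOn_of_hasDerivWithinAt_nonneg (convex_Icc x q) hcont.continuousOn
        (fun y _ => (hf y).hasDerivWithinAt) fun y hy => by
          rw [interior_Icc] at hy
          exact hpos y (hδx.trans (hδ hy.1.le))
    exact le_max_of_le_right (hmono ⟨le_rfl, hx.2⟩ ⟨hx.2, le_rfl⟩ hx.2)

lemma catenary_le_catenary {a₁ a₂ x₁ x₂ y₁ y₂ p q x : ℝ} (ha₁ : 0 < a₁) (ha : a₁ ≤ a₂)
    (hp : catenary a₁ x₁ y₁ p = catenary a₂ x₂ y₂ p)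
    (hq : catenary a₁ x₁ y₁ q = catenary a₂ x₂ y₂ q) (hx : x ∈ Icc p q) :
    catenary a₁ x₁ y₁ x ≤ catenary a₂ x₂ y₂ x := by
  have hδ : Monotone fun x => (x - x₁) / a₁ - (x - x₂) / a₂ := by
    intro s t hst
    have := div_le_div_of_nonneg_left (sub_nonneg.2 hst) ha₁ ha
    linear_combination this
  have := le_max_of_hasDerivAt_of_sign_monotone
    (fun x => (hasDerivAt_catenary ha₁.ne' x₁ y₁ x).sub
      (hasDerivAt_catenary (ha₁.trans_le ha).ne' x₂ y₂ x)) hδ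
    (fun x h => sub_nonpos.2 (sinh_le_sinh.2 (sub_nonpos.1 h)))
    (fun x h => sub_nonneg.2 (sinh_le_sinh.2 (sub_nonneg.1 h))) hx
  simpa only [Pi.sub_apply, hp, hq, sub_self, max_self, sub_nonpos] using this

theorem longer_catenary_lies_lower
    (a1 x01 y01 a2 x02 y02 xA xB hA hB l1 l2 : ℝ)
    (ha1 : 0 < a1) (ha2 : 0 < a2) (hx : xA < xB)
    (C1 C2 : ℝ → ℝ)
    (hC1 : ∀ x, C1 x = a1 * Real.cosh ((x - x01) / a1) + y01)
    (hC2 : ∀ x, C2 x = a2 * Real.cosh ((x - x02) / a2) + y02)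
    (hA1 : C1 xA = hA) (hA2 : C2 xA = hA)
    (hB1 : C1 xB = hB) (hB2 : C2 xB = hB)
    (hl1 : l1 = ∫ x in xA..xB, Real.sqrt (1 + deriv C1 x ^ 2))
    (hl2 : l2 = ∫ x in xA..xB, Real.sqrt (1 + deriv C2 x ^ 2))
    (hl : l1 ≥ l2) :
    ∀ x ∈ Set.Icc xA xB, C1 x ≤ C2 x := by
  have hl2_nonneg : 0 ≤ l2 :=
    hl2 ▸ intervalIntegral.integral_nonneg hx.le fun _ _ => sqrt_nonneg _
  obtain rfl : C1 = catenary a1 x01 y01 := funext hC1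
  obtain rfl : C2 = catenary a2 x02 y02 := funext hC2
  rw [integral_arcLength_catenary ha1.ne'] at hl1
  rw [integral_arcLength_catenary ha2.ne'] at hl2
  have hsq1 := sq_arcLength_catenary a1 x01 y01 xA xB
  have hsq2 := sq_arcLength_catenary a2 x02 y02 xA xB
  rw [← hl1, hA1, hB1] at hsq1
  rw [← hl2, hA2, hB2] at hsq2
  have hw : 0 < (xB - xA) / 2 := by linarith
  have hs_pos : ∀ a : ℝ, 0 < a → 0 < a * sinh ((xB - xA) / 2 / a) :=
    fun a ha => mul_pos ha (sinh_pos_iff.2 (div_pos hw ha))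
  have hs : a2 * sinh ((xB - xA) / 2 / a2) ≤ a1 * sinh ((xB - xA) / 2 / a1) := by
    have := pow_le_pow_left₀ hl2_nonneg hl 2
    nlinarith [hs_pos a1 ha1, hs_pos a2 ha2]
  have ha : a1 ≤ a2 := ((strictAntiOn_mul_sinh_div hw).le_iff_ge ha2 ha1).1 hs
  intro x hxI
  exact catenary_le_catenary ha1 ha (hA1.trans hA2.symm) (hB1.trans hB2.symm) hxI
end

section
/- Given suspension points A = (0, h1) and B = (S, h2) with S > 0, and any length λ > sqrt(S^2 + (h2 - h1)^2), there exists a catenary C(x) = a·cosh((x - x0)/a) + y0 with a > 0 passing through A and B whose arc length over [0, S] equals λ. -/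
open Real Filter Topology

lemma exists_sinh_eq_mul (c : ℝ) (hc : 1 < c) : ∃ t : ℝ, 0 < t ∧ Real.sinh t = c * t := by
  -- lower witness
  have hslope : Tendsto (slope Real.sinh 0) (𝓝[≠] 0) (𝓝 1) := by
    have := (Real.hasDerivAt_sinh 0)
    rw [hasDerivAt_iff_tendsto_slope] at this
    simpa [Real.cosh_zero] using this
  have hev : ∀ᶠ t in 𝓝[>] (0:ℝ), slope Real.sinh 0 t < c :=
    (hslope.eventually_lt_const hc).filter_mono
      (nhdsWithin_mono 0 (fun x hx => ne_of_gt hx))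
  obtain ⟨t₁, hlt, ht₁⟩ := (hev.and eventually_mem_nhdsWithin).exists
  have ht₁ : 0 < t₁ := ht₁
  have h1 : Real.sinh t₁ < c * t₁ := by
    have : Real.sinh t₁ / t₁ < c := by
      simpa [slope_def_field, Real.sinh_zero] using hlt
    calc Real.sinh t₁ = Real.sinh t₁ / t₁ * t₁ := by field_simp
    _ < c * t₁ := by exact mul_lt_mul_of_pos_right this ht₁
  -- upper witness
  set t₂ : ℝ := max (t₁ + 1) (8 * c) with ht₂def
  have ht₂pos : 0 < t₂ := lt_of_lt_of_le (by linarith) (le_max_left _ _)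
  have hsinh_lb : ∀ t : ℝ, 0 ≤ t → t / 2 + t ^ 2 / 8 ≤ Real.sinh t := by
    intro t ht
    have h1 : (1 + t / 2) ^ 2 ≤ Real.exp t := by
      have := Real.add_one_le_exp (t / 2)
      have h0 : (0:ℝ) ≤ 1 + t / 2 := by linarith
      calc (1 + t / 2) ^ 2 ≤ Real.exp (t / 2) ^ 2 := by
            apply pow_le_pow_left₀ h0 (by linarith) 2
      _ = Real.exp t := by rw [← Real.exp_nat_mul]; ring_nf
    have h2 : Real.exp (-t) ≤ 1 := Real.exp_le_one_iff.mpr (by linarith)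
    have : Real.sinh t = (Real.exp t - Real.exp (-t)) / 2 := Real.sinh_eq t
    nlinarith
  have h2 : c * t₂ < Real.sinh t₂ := by
    have hlb := hsinh_lb t₂ ht₂pos.le
    have h8 : 8 * c ≤ t₂ := le_max_right _ _
    nlinarith
  -- IVT
  have ht12 : t₁ ≤ t₂ := le_trans (by linarith) (le_max_left _ _)
  have hcont : ContinuousOn (fun t => Real.sinh t - c * t) (Set.Icc t₁ t₂) :=
    (Real.continuous_sinh.sub (continuous_const.mul continuous_id)).continuousOn
  have := intermediate_value_Icc ht12 hcont
  have hmem : (0:ℝ) ∈ Set.Icc (Real.sinh t₁ - c * t₁) (Real.sinh t₂ - c * t₂) :=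
    ⟨by linarith, by linarith⟩
  obtain ⟨t, htmem, hteq⟩ := this hmem
  have hteq' : Real.sinh t - c * t = 0 := hteq
  exact ⟨t, lt_of_lt_of_le ht₁ htmem.1, by linarith⟩

theorem catenary_exists_with_length
    (S h1 h2 lam : ℝ) (hS : 0 < S)
    (hlam : Real.sqrt (S ^ 2 + (h2 - h1) ^ 2) < lam) :
    ∃ a x0 y0 : ℝ, 0 < a ∧
      a * Real.cosh ((0 - x0) / a) + y0 = h1 ∧
      a * Real.cosh ((S - x0) / a) + y0 = h2 ∧
      a * (Real.sinh ((S - x0) / a) - Real.sinh ((0 - x0) / a)) = lam := by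
  set v : ℝ := h2 - h1 with hv
  have hlam0 : 0 < lam := lt_of_le_of_lt (Real.sqrt_nonneg _) hlam
  have hsq : S ^ 2 + v ^ 2 < lam ^ 2 := (Real.sqrt_lt' hlam0).mp hlam
  set L : ℝ := Real.sqrt (lam ^ 2 - v ^ 2) with hLdef
  have hSL : S < L := Real.lt_sqrt_of_sq_lt (by linarith)
  have hL0 : 0 < L := lt_trans hS hSL
  have hL2 : L ^ 2 = lam ^ 2 - v ^ 2 := Real.sq_sqrt (by nlinarith)
  have hc : 1 < L / S := (one_lt_div hS).mpr hSL
  obtain ⟨t, ht0, htc⟩ := exists_sinh_eq_mul (L / S) hc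
  set a : ℝ := S / (2 * t) with hadef
  have ha0 : 0 < a := div_pos hS (by linarith)
  have hkey : 2 * a * Real.sinh t = L := by
    rw [htc, hadef]; field_simp
  set u : ℝ := Real.arsinh (v / L) with hudef
  have hsu : Real.sinh u = v / L := Real.sinh_arsinh _
  have hcu : Real.cosh u = lam / L := by
    rw [hudef, Real.cosh_arsinh]
    have : 1 + (v / L) ^ 2 = (lam / L) ^ 2 := by
      field_simp
      nlinarith
    rw [this, Real.sqrt_sq (by positivity)]
  set x0 : ℝ := S / 2 - a * u with hx0def
  refine ⟨a, x0, h1 - a * Real.cosh ((0 - x0) / a), ha0, by ring, ?_, ?_⟩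
  · have harg1 : (0 - x0) / a = u - t := by
      rw [hx0def, hadef]; field_simp; ring
    have harg2 : (S - x0) / a = t + u := by
      rw [hx0def, hadef]; field_simp; ring
    rw [harg1, harg2, Real.cosh_add, Real.cosh_sub]
    have : a * (Real.cosh t * Real.cosh u + Real.sinh t * Real.sinh u) -
        a * (Real.cosh u * Real.cosh t - Real.sinh u * Real.sinh t) = v := by
      have : 2 * a * Real.sinh t * Real.sinh u = v := by
        rw [hkey, hsu]; field_simp
      nlinarith [this]
    linarith [this]
  · have harg1 : (0 - x0) / a = u - t := by
      rw [hx0def, hadef]; field_simp; ring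
    have harg2 : (S - x0) / a = t + u := by
      rw [hx0def, hadef]; field_simp; ring
    rw [harg1, harg2, Real.sinh_add, Real.sinh_sub]
    have h3 : 2 * a * Real.sinh t * Real.cosh u = lam := by
      rw [hkey, hcu]; field_simp
    linear_combination h3
end

section
/- Let f_p be the downward parabola (p < 0) through fixed points A = (xA, yA) and B = (xB, yB), xA < xB. The map p ↦ arc length of f_p over [xA, xB] is continuous and tends to infinity as p → -∞. -/
theorem parabola_length_continuous_tendsto_atTop
    (xA yA xB yB : ℝ) (hx : xA < xB)
    (q : ℝ → ℝ) (hq : ∀ p, q p = (yB - yA) / (xB - xA) - p * (xA + xB))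
    (L : ℝ → ℝ)
    (hL : ∀ p, L p = ∫ x in xA..xB, Real.sqrt (1 + (2 * p * x + q p) ^ 2)) :
    ContinuousOn L (Set.Iio 0) ∧ Filter.Tendsto L Filter.atBot Filter.atTop := by
  set s : ℝ := (yB - yA) / (xB - xA) with hs
  -- joint continuity of the integrand
  have hF : Continuous (Function.uncurry fun p x =>
      Real.sqrt (1 + (2 * p * x + q p) ^ 2)) := by
    have hqc : Continuous q := by
      have : q = fun p => s - p * (xA + xB) := funext hq
      rw [this]; fun_prop
    apply Continuous.sqrt
    fun_prop
  have hcont : Continuous L := by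
    have : L = fun p => ∫ x in xA..xB, Real.sqrt (1 + (2 * p * x + q p) ^ 2) :=
      funext hL
    rw [this]
    exact intervalIntegral.continuous_parametric_intervalIntegral_of_continuous' hF xA xB
  refine ⟨hcont.continuousOn, ?_⟩
  set m : ℝ := (xA + xB) / 2 with hm
  have hxm : xA ≤ m := by simp only [hm]; linarith
  have hmx : m ≤ xB := by simp only [hm]; linarith
  -- lower bound
  have key : ∀ p, p * (m ^ 2 - xA ^ 2) + q p * (m - xA) ≤ L p := by
    intro p
    have hc1 : Continuous fun x => Real.sqrt (1 + (2 * p * x + q p) ^ 2) := by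
      apply Continuous.sqrt; fun_prop
    have hc2 : Continuous fun x : ℝ => 2 * p * x + q p := by fun_prop
    have hsplit : L p = (∫ x in xA..m, Real.sqrt (1 + (2 * p * x + q p) ^ 2))
        + ∫ x in m..xB, Real.sqrt (1 + (2 * p * x + q p) ^ 2) := by
      rw [hL p, intervalIntegral.integral_add_adjacent_intervals
        (hc1.intervalIntegrable _ _) (hc1.intervalIntegrable _ _)]
    have h2 : 0 ≤ ∫ x in m..xB, Real.sqrt (1 + (2 * p * x + q p) ^ 2) :=
      intervalIntegral.integral_nonneg hmx (fun x _ => Real.sqrt_nonneg _)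
    have h1 : (∫ x in xA..m, (2 * p * x + q p))
        ≤ ∫ x in xA..m, Real.sqrt (1 + (2 * p * x + q p) ^ 2) := by
      apply intervalIntegral.integral_mono_on hxm (hc2.intervalIntegrable _ _)
        (hc1.intervalIntegrable _ _)
      intro x _
      calc 2 * p * x + q p ≤ |2 * p * x + q p| := le_abs_self _
        _ = Real.sqrt ((2 * p * x + q p) ^ 2) := (Real.sqrt_sq_eq_abs _).symm
        _ ≤ Real.sqrt (1 + (2 * p * x + q p) ^ 2) := by
            apply Real.sqrt_le_sqrt; linarith
    have hval : (∫ x in xA..m, (2 * p * x + q p))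
        = p * (m ^ 2 - xA ^ 2) + q p * (m - xA) := by
      have : (∫ x in xA..m, (2 * p * x + q p))
          = (∫ x in xA..m, 2 * p * x) + ∫ x in xA..m, q p := by
        rw [← intervalIntegral.integral_add
          ((by fun_prop : Continuous fun x : ℝ => 2 * p * x).intervalIntegrable _ _)
          (intervalIntegrable_const)]
      rw [this]
      have h2px : (∫ x in xA..m, 2 * p * x) = 2 * p * ((m ^ 2 - xA ^ 2) / 2) := by
        rw [intervalIntegral.integral_const_mul, integral_id]
      rw [h2px, intervalIntegral.integral_const, smul_eq_mul]
      ring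
    linarith [hsplit ▸ (by linarith : (∫ x in xA..m, (2 * p * x + q p)) + 0 ≤
      (∫ x in xA..m, Real.sqrt (1 + (2 * p * x + q p) ^ 2))
        + ∫ x in m..xB, Real.sqrt (1 + (2 * p * x + q p) ^ 2))]
  -- the lower bound tends to atTop
  have hlin : Filter.Tendsto (fun p => p * (m ^ 2 - xA ^ 2) + q p * (m - xA))
      Filter.atBot Filter.atTop := by
    have heq : (fun p => p * (m ^ 2 - xA ^ 2) + q p * (m - xA))
        = fun p => ((xA - m) * (m - xB)) * (-p) + s * (m - xA) := by
      funext p; rw [hq p]; ring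
    rw [heq]
    apply Filter.tendsto_atTop_add_const_right
    apply Filter.Tendsto.const_mul_atTop
    · have h1 : xA < m := by simp only [hm]; linarith
      have h2 : m < xB := by simp only [hm]; linarith
      nlinarith
    · exact Filter.tendsto_neg_atBot_atTop
  exact Filter.tendsto_atTop_mono key hlin
end
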